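/- Let (V, 𝒮) be a simplicial fan supported on ℝⁿ_{≥0}, let E ∈ 𝒮, and let F ∈ lk(E) be a maximal non-U-pyramid (F ∪ E is interior, F is not a U-pyramid, and every F′ ∈ lk(E) with F ⊊ F′ is a U-pyramid). Suppose 𝒜_F = {A₁,…,A_r} with V_{A_i} = {2i−1, 2i} and (A_i)_{2i−1} = (A_i)_{2i} = 1 for 1 ≤ i ≤ r. Let S ⊆ {1,…,r} be nonempty, and let G ∈ lk(F ∪ E) be such that for every j ∈ S both 2j−1 ∈ σ(G) and 2j ∈ σ(G). For each j ∈ {1,…,r} ∖ S choose a linear functional u_j : ℝⁿ → ℝ with u_j(A_j) = 1 and u_j(w) = 0 for every w ∈ (F ∪ E) ∖ {A_j}, and set y_j := −Σ_{v ∈ W(F∪E)} u_j(v) · x_v, viewed in the ring H(F ∪ E). Then the element (Π_{v∈G} x_v) · Π_{j ∈ {1,…,r}∖S} y_j equals 0 in H(F ∪ E). -/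

import Mathlib

open scoped Classical

noncomputable section

/-- The conical hull (set of nonnegative linear combinations) of a finite set of
vectors in `ℝⁿ`. -/
def coneOf {n : ℕ} (F : Finset (Fin n → ℝ)) : Set (Fin n → ℝ) :=
  {x | ∃ lam : (Fin n → ℝ) → ℝ, (∀ v ∈ F, 0 ≤ lam v) ∧ x = ∑ v ∈ F, lam v • v}

/-- A simplicial fan supported on `ℝⁿ_{≥0}`, encoding a geometric triangulation of
the `(n-1)`-dimensional simplex: a finite vertex set `V ⊆ ℝⁿ_{≥0} ∖ {0}` together
with a downward-closed collection of linearly independent finite subsets of `V`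
(the faces, including `∅`) whose cones cover the nonnegative orthant and intersect
along common faces. -/
structure SimplicialFan (n : ℕ) where
  verts : Finset (Fin n → ℝ)
  faces : Finset (Finset (Fin n → ℝ))
  verts_nonneg : ∀ v ∈ verts, ∀ i, 0 ≤ v i
  verts_ne_zero : ∀ v ∈ verts, v ≠ 0
  faces_subset_verts : ∀ F ∈ faces, F ⊆ verts
  empty_mem : ∅ ∈ faces
  indep : ∀ F ∈ faces, LinearIndependent ℝ (fun v : {x // x ∈ F} => (v : Fin n → ℝ))
  down_closed : ∀ F ∈ faces, ∀ F' ⊆ F, F' ∈ faces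
  covers : (⋃ F ∈ faces, coneOf F) = {x : Fin n → ℝ | ∀ i, 0 ≤ x i}
  inter_cone : ∀ F ∈ faces, ∀ F' ∈ faces, coneOf F ∩ coneOf F' = coneOf (F ∩ F')

/-- `σ(F)`: the set of coordinates `ℓ` such that some `v ∈ F` has `v_ℓ ≠ 0`. -/
def suppSet {n : ℕ} (F : Finset (Fin n → ℝ)) : Finset (Fin n) :=
  Finset.univ.filter fun ℓ => ∃ v ∈ F, v ℓ ≠ 0

/-- A face is interior if its support is all of `{1,…,n}`. -/
def IsInteriorFace {n : ℕ} (F : Finset (Fin n → ℝ)) : Prop :=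
  suppSet F = Finset.univ

/-- The excess `e(F) = |σ(F)| − |F|`. -/
def excess {n : ℕ} (F : Finset (Fin n → ℝ)) : ℕ :=
  (suppSet F).card - F.card

/-- The link of a face `E`: faces `F` with `F ∩ E = ∅` and `F ∪ E ∈ 𝒮`. -/
def link {n : ℕ} (S : SimplicialFan n) (E : Finset (Fin n → ℝ)) :
    Finset (Finset (Fin n → ℝ)) :=
  S.faces.filter fun F => F ∩ E = ∅ ∧ F ∪ E ∈ S.faces

/-- `F ∈ lk(E)` is a pyramid with apex `A ∈ F` if `F ∪ E` is interior but
`(F ∪ E) ∖ {A}` is not. -/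
def IsPyramidApex {n : ℕ} (E F : Finset (Fin n → ℝ)) (A : Fin n → ℝ) : Prop :=
  A ∈ F ∧ IsInteriorFace (F ∪ E) ∧ ¬ IsInteriorFace ((F ∪ E).erase A)

/-- `𝒜_F`: the set of apices of `F` (relative to `E`). -/
def apices {n : ℕ} (E F : Finset (Fin n → ℝ)) : Finset (Fin n → ℝ) :=
  F.filter fun A => IsPyramidApex E F A

/-- `V_A = {1,…,n} ∖ σ((F ∪ E) ∖ {A})`. -/
def baseDirs {n : ℕ} (E F : Finset (Fin n → ℝ)) (A : Fin n → ℝ) : Finset (Fin n) :=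
  Finset.univ \ suppSet ((F ∪ E).erase A)

/-- `F` is a U-pyramid if `|V_A| = 1` for some apex `A` of `F`. -/
def IsUPyramid {n : ℕ} (E F : Finset (Fin n → ℝ)) : Prop :=
  ∃ A ∈ apices E F, (baseDirs E F A).card = 1

/-- A full partition of `F ∈ lk(E)`: a decomposition `F = F₁ ⊔ F₂ ⊔ 𝒜_F` with
`F₁ ∪ 𝒜_F ∪ E` interior and `σ(F₂ ∪ E) = {1,…,n} ∖ ⋃_{A ∈ 𝒜_F} V_A`. -/
def IsFullPartition {n : ℕ} (E F F₁ F₂ : Finset (Fin n → ℝ)) : Prop :=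
  F = F₁ ∪ F₂ ∪ apices E F ∧
  Disjoint F₁ F₂ ∧ Disjoint F₁ (apices E F) ∧ Disjoint F₂ (apices E F) ∧
  IsInteriorFace (F₁ ∪ apices E F ∪ E) ∧
  suppSet (F₂ ∪ E) = Finset.univ \ (apices E F).biUnion (baseDirs E F)

/-- The local `h`-polynomial
`ℓ(𝒮, E; t) = Σ_{F ∈ 𝒮, E ⊆ F} (−1)^{n−|F|} t^{(n−|E|)−e(F)} (t−1)^{e(F)}`. -/
def localH {n : ℕ} (S : SimplicialFan n) (E : Finset (Fin n → ℝ)) : Polynomial ℤ :=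
  ∑ F ∈ S.faces.filter (fun F => E ⊆ F),
    Polynomial.C ((-1 : ℤ) ^ (n - F.card)) *
      Polynomial.X ^ ((n - E.card) - excess F) * (Polynomial.X - 1) ^ (excess F)

/-- `W(E′) = {v ∈ V ∖ E′ : {v} ∪ E′ ∈ 𝒮}`, the vertices of the link of `E′`. -/
def fanW {n : ℕ} (S : SimplicialFan n) (E' : Finset (Fin n → ℝ)) :
    Finset (Fin n → ℝ) :=
  (S.verts \ E').filter fun v => insert v E' ∈ S.faces

/-- The ideal `I(E′)` in `ℝ[x_v : v ∈ W(E′)]` generated by the non-face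
monomials and by the linear forms `θ_u = Σ_{v ∈ W(E′)} u(v)·x_v` over all linear
functionals `u` vanishing on `span(E′)`. -/
def ringHIdeal {n : ℕ} (S : SimplicialFan n) (E' : Finset (Fin n → ℝ)) :
    Ideal (MvPolynomial {v // v ∈ fanW S E'} ℝ) :=
  Ideal.span
    ({m | ∃ G' : Finset {v // v ∈ fanW S E'},
        (G'.image (fun v => (v : Fin n → ℝ))) ∪ E' ∉ S.faces ∧
        m = ∏ v ∈ G', MvPolynomial.X v} ∪
     {p | ∃ u : (Fin n → ℝ) →ₗ[ℝ] ℝ,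
        (∀ w ∈ Submodule.span ℝ (E' : Set (Fin n → ℝ)), u w = 0) ∧
        p = ∑ v : {v // v ∈ fanW S E'}, MvPolynomial.C (u v) * MvPolynomial.X v})

/-!
Write `x^H = ∏_{v ∈ H} x_v` and `θ_u = Σ_v u(v) x_v`, so that `y_j = -θ_{u_j}`. We show that
`x^H · ∏_{j ∈ T} θ_{u_j}` lies in `I(F ∪ E)` whenever `H` is nonempty and `σ(H)` contains
`V_{A_i}` for every `i ∉ T`, by induction on `T`. If `H ∪ F ∪ E` is not a face, `x^H` is a
generator. Otherwise `F ∪ H ∈ lk(E)` strictly contains `F`, so it is a U-pyramid; its apex is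
an apex `A_i` of `F`, and `V_{A_i} ∖ σ(H) = {c}` is a single coordinate, forcing `i ∈ T`.
Since `u_i - (A_i)_c⁻¹ x_c` vanishes on `F ∪ E`, modulo the ideal
`θ_{u_i} ≡ (A_i)_c⁻¹ Σ_{v_c ≠ 0} v_c x_v`, and each `x^H x_v` with `v_c ≠ 0` is a multiple
of `x^{H ∪ {v}}`, where `σ(H ∪ {v}) ⊇ V_{A_i}`: the induction hypothesis for `T ∖ {i}`
applies.
-/

open MvPolynomial

section Support

variable {n : ℕ}

theorem mem_suppSet {F : Finset (Fin n → ℝ)} {ℓ : Fin n} :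
    ℓ ∈ suppSet F ↔ ∃ v ∈ F, v ℓ ≠ 0 := by
  simp [suppSet]

theorem suppSet_mono {F F' : Finset (Fin n → ℝ)} (h : F ⊆ F') : suppSet F ⊆ suppSet F' := by
  intro ℓ
  simp only [mem_suppSet]
  exact fun ⟨v, hv, hvℓ⟩ => ⟨v, h hv, hvℓ⟩

theorem suppSet_union (F F' : Finset (Fin n → ℝ)) :
    suppSet (F ∪ F') = suppSet F ∪ suppSet F' := by
  ext ℓ
  simp only [mem_suppSet, Finset.mem_union, or_and_right, exists_or]

theorem IsInteriorFace.mono {F F' : Finset (Fin n → ℝ)} (hF : IsInteriorFace F) (h : F ⊆ F') :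
    IsInteriorFace F' :=
  Finset.univ_subset_iff.1 (hF ▸ suppSet_mono h)

theorem subset_suppSet_insert {D : Finset (Fin n)} {H : Finset (Fin n → ℝ)} {c : Fin n}
    {v : Fin n → ℝ} (hD : D \ suppSet H = {c}) (hv : v c ≠ 0) : D ⊆ suppSet (insert v H) :=
  (sdiff_le_iff.1 hD.le).trans <| Finset.union_subset
    (suppSet_mono (Finset.subset_insert v H))
    (Finset.singleton_subset_iff.2 (mem_suppSet.2 ⟨v, Finset.mem_insert_self v H, hv⟩))

end Support

theorem prod_X_insert_dvd {σ R : Type*} [CommSemiring R] [DecidableEq σ] (H : Finset σ)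
    (v : σ) :
    ∏ w ∈ insert v H, (X w : MvPolynomial σ R) ∣ X v * ∏ w ∈ H, X w := by
  by_cases hv : v ∈ H
  · rw [Finset.insert_eq_of_mem hv]
    exact dvd_mul_left _ _
  · rw [Finset.prod_insert hv]

section Pyramid

variable {n : ℕ} {E F H : Finset (Fin n → ℝ)} {B w : Fin n → ℝ} {c : Fin n}

theorem coord_eq_zero_of_mem_baseDirs (hc : c ∈ baseDirs E F B) (hw : w ∈ F ∪ E)
    (hwB : w ≠ B) : w c = 0 := by
  by_contra h
  exact (Finset.mem_sdiff.1 hc).2 (mem_suppSet.2 ⟨w, Finset.mem_erase.2 ⟨hwB, hw⟩, h⟩)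

theorem coord_ne_zero_of_mem_baseDirs (hint : IsInteriorFace (F ∪ E))
    (hc : c ∈ baseDirs E F B) : B c ≠ 0 := by
  obtain ⟨w, hw, hwc⟩ := mem_suppSet.1 (hint ▸ Finset.mem_univ c)
  obtain rfl : w = B := by_contra fun hwB => hwc (coord_eq_zero_of_mem_baseDirs hc hw hwB)
  exact hwc

theorem IsPyramidApex.of_union (hB : IsPyramidApex E (F ∪ H) B) (hint : IsInteriorFace (F ∪ E))
    (hH : Disjoint H (F ∪ E)) :
    B ∈ apices E F ∧ baseDirs E (F ∪ H) B = baseDirs E F B \ suppSet H := by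
  obtain ⟨hBFH, -, hnot⟩ := hB
  -- Removing a vertex of `H` would leave the interior face `F ∪ E`.
  have hBH : B ∉ H := by
    intro hBH
    refine hnot (hint.mono fun x hx => Finset.mem_erase.2 ⟨?_, ?_⟩)
    · rintro rfl
      exact Finset.disjoint_left.1 hH hBH hx
    · simp only [Finset.mem_union] at hx ⊢
      tauto
  have hBF : B ∈ F := (Finset.mem_union.1 hBFH).resolve_right hBH
  have herase : (F ∪ H ∪ E).erase B = (F ∪ E).erase B ∪ H := by
    ext x
    simp only [Finset.mem_erase, Finset.mem_union]
    constructor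
    · tauto
    · rintro (h | h)
      · tauto
      · exact ⟨fun hxB => hBH (hxB ▸ h), Or.inl (Or.inr h)⟩
  refine ⟨Finset.mem_filter.2 ⟨hBF, hBF, hint, fun h => hnot ?_⟩, ?_⟩
  · exact h.mono (herase ▸ Finset.subset_union_left)
  · rw [baseDirs, baseDirs, herase, suppSet_union, sdiff_sdiff_left]
    rfl

end Pyramid

namespace SimplicialFan

variable {n : ℕ} (S : SimplicialFan n) {E F H : Finset (Fin n → ℝ)}

theorem union_mem_link (hF : F ∈ link S E) (hH : H ∪ (F ∪ E) ∈ S.faces)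
    (hdisj : Disjoint H (F ∪ E)) : F ∪ H ∈ link S E := by
  obtain ⟨-, hFE, -⟩ := Finset.mem_filter.1 hF
  have hFHE : F ∪ H ∪ E ∈ S.faces :=
    S.down_closed _ hH _ (by intro x; simp only [Finset.mem_union]; tauto)
  refine Finset.mem_filter.2 ⟨S.down_closed _ hFHE _ Finset.subset_union_left, ?_, hFHE⟩
  rw [Finset.union_inter_distrib_right, hFE, Finset.empty_union,
    ← Finset.disjoint_iff_inter_eq_empty]
  exact hdisj.mono_right Finset.subset_union_right

theorem exists_apex_card_baseDirs_sdiff_eq_one (hF : F ∈ link S E)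
    (hint : IsInteriorFace (F ∪ E)) (hmax : ∀ F' ∈ link S E, F ⊂ F' → IsUPyramid E F')
    (hH : H ∪ (F ∪ E) ∈ S.faces) (hdisj : Disjoint H (F ∪ E)) (hne : H.Nonempty) :
    ∃ B ∈ apices E F, (baseDirs E F B \ suppSet H).card = 1 := by
  obtain ⟨w, hw⟩ := hne
  have hssub : F ⊂ F ∪ H := (Finset.ssubset_iff_of_subset Finset.subset_union_left).2
    ⟨w, Finset.mem_union_right _ hw,
      fun hwF => Finset.disjoint_left.1 hdisj hw (Finset.mem_union_left _ hwF)⟩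
  obtain ⟨B, hB, hcard⟩ := hmax _ (S.union_mem_link hF hH hdisj) hssub
  obtain ⟨hBF, hbase⟩ := (Finset.mem_filter.1 hB).2.of_union hint hdisj
  exact ⟨B, hBF, hbase ▸ hcard⟩

theorem disjoint_fanW (E' : Finset (Fin n → ℝ)) : Disjoint (fanW S E') E' :=
  Finset.disjoint_left.2 fun _ hv => (Finset.mem_sdiff.1 (Finset.mem_filter.1 hv).1).2

theorem subset_fanW_of_mem_link {E' G : Finset (Fin n → ℝ)} (hG : G ∈ link S E') :
    G ⊆ fanW S E' := by
  obtain ⟨hGf, hGE, hGun⟩ := Finset.mem_filter.1 hG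
  intro v hv
  have hvE : v ∉ E' := fun hvE => Finset.notMem_empty v (hGE ▸ Finset.mem_inter.2 ⟨hv, hvE⟩)
  exact Finset.mem_filter.2 ⟨Finset.mem_sdiff.2 ⟨S.faces_subset_verts G hGf hv, hvE⟩,
    S.down_closed _ hGun _ (Finset.insert_subset (Finset.mem_union_left _ hv)
      Finset.subset_union_right)⟩

def theta (E' : Finset (Fin n → ℝ)) :
    ((Fin n → ℝ) →ₗ[ℝ] ℝ) →ₗ[ℝ] MvPolynomial {v // v ∈ fanW S E'} ℝ where
  toFun u := ∑ v : {v // v ∈ fanW S E'}, C (u v) * X v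
  map_add' u u' := by
    simp only [LinearMap.add_apply, map_add, add_mul, Finset.sum_add_distrib]
  map_smul' a u := by
    simp only [LinearMap.smul_apply, smul_eq_mul, map_mul, Finset.smul_sum, smul_eq_C_mul,
      RingHom.id_apply, mul_assoc]

theorem theta_apply (E' : Finset (Fin n → ℝ)) (u : (Fin n → ℝ) →ₗ[ℝ] ℝ) :
    S.theta E' u = ∑ v : {v // v ∈ fanW S E'}, C (u v) * X v :=
  rfl

theorem theta_mem_ringHIdeal {E' : Finset (Fin n → ℝ)} {u : (Fin n → ℝ) →ₗ[ℝ] ℝ}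
    (hu : ∀ w ∈ E', u w = 0) : S.theta E' u ∈ ringHIdeal S E' :=
  Ideal.subset_span <| Or.inr ⟨u, fun _ hw =>
    Submodule.span_le.2 (fun x hx => LinearMap.mem_ker.2 (hu x hx)) hw, rfl⟩

theorem prod_X_mem_ringHIdeal {E' : Finset (Fin n → ℝ)} (H : Finset {v // v ∈ fanW S E'})
    (h : H.image Subtype.val ∪ E' ∉ S.faces) : ∏ v ∈ H, X v ∈ ringHIdeal S E' :=
  Ideal.subset_span <| Or.inl ⟨H, by convert h using 3; ext; simp, rfl⟩

theorem theta_sub_theta_proj_mem_ringHIdeal (hint : IsInteriorFace (F ∪ E)) {B : Fin n → ℝ}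
    {c : Fin n} (hc : c ∈ baseDirs E F B) {u : (Fin n → ℝ) →ₗ[ℝ] ℝ} (huB : u B = 1)
    (hu0 : ∀ w ∈ F ∪ E, w ≠ B → u w = 0) :
    S.theta (F ∪ E) u - S.theta (F ∪ E) ((B c)⁻¹ • LinearMap.proj c) ∈
      ringHIdeal S (F ∪ E) := by
  rw [← map_sub]
  refine S.theta_mem_ringHIdeal fun w hw => ?_
  by_cases hwB : w = B
  · subst hwB
    simp [huB, coord_ne_zero_of_mem_baseDirs hint hc]
  · simp [hu0 w hw hwB, coord_eq_zero_of_mem_baseDirs hc hw hwB]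

theorem prod_X_mul_prod_theta_mem_ringHIdeal (hF : F ∈ link S E)
    (hint : IsInteriorFace (F ∪ E)) (hmax : ∀ F' ∈ link S E, F ⊂ F' → IsUPyramid E F')
    {ι : Type*} (A : ι → Fin n → ℝ) (hApexAll : ∀ B ∈ apices E F, ∃ i, B = A i)
    (u : ι → (Fin n → ℝ) →ₗ[ℝ] ℝ) (T : Finset ι)
    (hu : ∀ j ∈ T, u j (A j) = 1 ∧ ∀ w ∈ F ∪ E, w ≠ A j → u j w = 0)
    (H : Finset {v // v ∈ fanW S (F ∪ E)}) (hne : H.Nonempty)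
    (hcov : ∀ i ∉ T, baseDirs E F (A i) ⊆ suppSet (H.image Subtype.val)) :
    (∏ v ∈ H, X v) * ∏ j ∈ T, S.theta (F ∪ E) (u j) ∈ ringHIdeal S (F ∪ E) := by
  induction T using Finset.strongInduction generalizing H with
  | H T ih =>
  by_cases hface : H.image Subtype.val ∪ (F ∪ E) ∈ S.faces
  swap
  · exact Ideal.mul_mem_right _ _ (S.prod_X_mem_ringHIdeal H hface)
  have hdisj : Disjoint (H.image Subtype.val) (F ∪ E) :=
    (S.disjoint_fanW _).mono_left (by simp [Finset.image_subset_iff])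
  obtain ⟨B, hB, hcard⟩ :=
    S.exists_apex_card_baseDirs_sdiff_eq_one hF hint hmax hface hdisj (hne.image _)
  obtain ⟨i, rfl⟩ := hApexAll B hB
  obtain ⟨c, hc⟩ := Finset.card_eq_one.1 hcard
  have hcB : c ∈ baseDirs E F (A i) := (Finset.mem_sdiff.1 (hc ▸ Finset.mem_singleton_self c)).1
  have hiT : i ∈ T := by
    by_contra hiT
    simp [Finset.sdiff_eq_empty_iff_subset.2 (hcov i hiT)] at hc
  obtain ⟨huA, hu0⟩ := hu i hiT
  have hθ := S.theta_sub_theta_proj_mem_ringHIdeal hint hcB huA hu0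
  have hcov' (v : {v // v ∈ fanW S (F ∪ E)}) (hv : v.1 c ≠ 0) (j : ι)
      (hj : j ∉ T.erase i) : baseDirs E F (A j) ⊆ suppSet ((insert v H).image Subtype.val) := by
    rw [Finset.image_insert]
    by_cases hji : j = i
    · exact hji ▸ subset_suppSet_insert hc hv
    · exact (hcov j fun hjT => hj (Finset.mem_erase.2 ⟨hji, hjT⟩)).trans
        (suppSet_mono (Finset.subset_insert _ _))
  set P := ∏ j ∈ T.erase i, S.theta (F ∪ E) (u j)
  suffices hP : S.theta (F ∪ E) ((A i c)⁻¹ • LinearMap.proj c) * ((∏ v ∈ H, X v) * P) ∈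
      ringHIdeal S (F ∪ E) by
    rw [← Finset.mul_prod_erase T _ hiT, mul_left_comm, ← sub_add_cancel (S.theta _ (u i)) _,
      add_mul]
    exact Ideal.add_mem _ (Ideal.mul_mem_right _ _ hθ) hP
  rw [theta_apply, Finset.sum_mul]
  refine Ideal.sum_mem _ fun v _ => ?_
  by_cases hv : v.1 c = 0
  · simp [hv]
  have hvH := ih _ (Finset.erase_ssubset hiT) (fun j hj => hu j (Finset.mem_of_mem_erase hj))
    (insert v H) (Finset.insert_nonempty v H) (hcov' v hv)
  refine Ideal.mem_of_dvd _ ?_ hvH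
  rw [mul_assoc, ← mul_assoc (X v)]
  exact dvd_mul_of_dvd_right (mul_dvd_mul (prod_X_insert_dvd H v) (dvd_refl P)) _

end SimplicialFan

/-- Vanishing of the mixed monomial-linear-form products in the ring
`H(F ∪ E)` for a maximal non-U-pyramid with apices `A₁,…,A_r` of base pairs
`V_{A_i} = {2i−1, 2i}`. -/
theorem mixed_product_eq_zero_in_H {n r : ℕ} (S : SimplicialFan n)
    (hrn : 2 * r ≤ n)
    (E : Finset (Fin n → ℝ))
    (F : Finset (Fin n → ℝ)) (hF : F ∈ link S E)
    (hint : IsInteriorFace (F ∪ E))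
    (hmax : ∀ F' ∈ link S E, F ⊂ F' → IsUPyramid E F')
    (A : Fin r → (Fin n → ℝ))
    (hApexAll : ∀ B ∈ apices E F, ∃ i, B = A i)
    (hbase : ∀ i : Fin r, baseDirs E F (A i) =
      {(⟨2 * (i : ℕ), by have := i.isLt; omega⟩ : Fin n),
       (⟨2 * (i : ℕ) + 1, by have := i.isLt; omega⟩ : Fin n)})
    (Sset : Finset (Fin r)) (hSset : Sset.Nonempty)
    (G : Finset (Fin n → ℝ)) (hG : G ∈ link S (F ∪ E))
    (hGsupp : ∀ j ∈ Sset,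
      (⟨2 * (j : ℕ), by have := j.isLt; omega⟩ : Fin n) ∈ suppSet G ∧
      (⟨2 * (j : ℕ) + 1, by have := j.isLt; omega⟩ : Fin n) ∈ suppSet G)
    (u : Fin r → ((Fin n → ℝ) →ₗ[ℝ] ℝ))
    (hu : ∀ j ∉ Sset, u j (A j) = 1 ∧ ∀ w ∈ F ∪ E, w ≠ A j → u j w = 0) :
    Ideal.Quotient.mk (ringHIdeal S (F ∪ E))
      ((∏ v ∈ Finset.univ.filter
          (fun v : {v // v ∈ fanW S (F ∪ E)} => (v : Fin n → ℝ) ∈ G),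
          MvPolynomial.X v) *
        ∏ j ∈ Finset.univ \ Sset,
          (- ∑ v : {v // v ∈ fanW S (F ∪ E)},
            MvPolynomial.C (u j (v : Fin n → ℝ)) * MvPolynomial.X v)) = 0 := by
  set H := Finset.univ.filter (fun v : {v // v ∈ fanW S (F ∪ E)} => (v : Fin n → ℝ) ∈ G)
  have hHG : H.image Subtype.val = G := by
    ext x
    simpa [H] using fun hx => S.subset_fanW_of_mem_link hG hx
  have hne : H.Nonempty := by
    obtain ⟨j, hj⟩ := hSset
    obtain ⟨v, hv, -⟩ := mem_suppSet.1 (hGsupp j hj).1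
    rw [← Finset.image_nonempty (f := Subtype.val), hHG]
    exact ⟨v, hv⟩
  have hcov : ∀ i ∉ Finset.univ \ Sset,
      baseDirs E F (A i) ⊆ suppSet (H.image Subtype.val) := by
    intro i hi
    obtain ⟨h₁, h₂⟩ := hGsupp i (by simpa using hi)
    rw [hbase i, hHG, Finset.insert_subset_iff, Finset.singleton_subset_iff]
    exact ⟨h₁, h₂⟩
  have hmem := S.prod_X_mul_prod_theta_mem_ringHIdeal hF hint hmax A hApexAll u _
    (fun j hj => hu j (Finset.mem_sdiff.1 hj).2) H hne hcov
  rw [Ideal.Quotient.eq_zero_iff_mem, Finset.prod_neg, mul_left_comm]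
  exact Ideal.mul_mem_left _ _ hmem

end
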